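/- Let A be an associative algebra over a field F with char F ≠ 2, let B be an associative algebra which is a domain (no zero divisors), and let φ : A → B be a Jordan homomorphism. Then φ is either an algebra homomorphism or an algebra antihomomorphism (i.e., either φ(ab) = φ(a)φ(b) for all a,b, or φ(ab) = φ(b)φ(a) for all a,b). -/

import Mathlib

/-!
Polarizing `φ (x * x) = φ x * φ x` gives `φ (a * b + b * a) = φ a * φ b + φ b * φ a`, and from
`2 • (a * b * a) = a * (a * b + b * a) + (a * b + b * a) * a - (a * a * b + b * (a * a))` one gets
`φ (a * b * a) = φ a * φ b * φ a` once `2` can be cancelled in `B`. Linearizing this in `a` and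
substituting `c = a * b` in `φ (a * b * c + c * b * a) = φ a * φ b * φ c + φ c * φ b * φ a` yields
`(φ (a * b) - φ a * φ b) * (φ (a * b) - φ b * φ a) = 0`, so in a domain every pair `(a, b)` is
multiplicative or antimultiplicative. Both conditions are additive in `b` for fixed `a`, and then
additive in `a`; since a group is never the union of two proper subgroups, one of them holds
everywhere.
-/

theorem AddSubgroup.eq_top_or_eq_top_of_forall_mem_or_mem {G : Type*} [AddGroup G]
    {H K : AddSubgroup G} (h : ∀ x, x ∈ H ∨ x ∈ K) : H = ⊤ ∨ K = ⊤ := by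
  simp only [eq_top_iff']
  by_contra! hne
  obtain ⟨⟨x, hxH⟩, ⟨y, hyK⟩⟩ := hne
  have hxK := (h x).resolve_left hxH
  have hyH := (h y).resolve_right hyK
  rcases h (x + y) with hH | hK
  · exact hxH ((H.add_mem_cancel_right hyH).mp hH)
  · exact hyK ((K.add_mem_cancel_left hxK).mp hK)

theorem AddMonoidHom.eq_or_eq_of_forall_eq_or_eq {G H : Type*} [AddGroup G] [AddGroup H]
    (f₁ g₁ f₂ g₂ : G →+ H) (h : ∀ x, f₁ x = g₁ x ∨ f₂ x = g₂ x) : f₁ = g₁ ∨ f₂ = g₂ :=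
  (AddSubgroup.eq_top_or_eq_top_of_forall_mem_or_mem (H := f₁.eqLocus g₁) (K := f₂.eqLocus g₂)
    h).imp (fun h₁ ↦ ext ((AddSubgroup.eq_top_iff' _).mp h₁))
      (fun h₂ ↦ ext ((AddSubgroup.eq_top_iff' _).mp h₂))

def IsJordanHom {A B : Type*} [Mul A] [Mul B] (φ : A → B) : Prop :=
  ∀ x, φ (x * x) = φ x * φ x

namespace IsJordanHom

variable {A B G : Type*} [NonUnitalRing A] [NonUnitalRing B] [FunLike G A B]
  [AddMonoidHomClass G A B] {φ : G}

theorem map_mul_add_mul_comm (hφ : IsJordanHom φ) (a b : A) :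
    φ (a * b + b * a) = φ a * φ b + φ b * φ a := by
  calc φ (a * b + b * a) = φ ((a + b) * (a + b)) - φ (a * a) - φ (b * b) := by
        rw [← map_sub, ← map_sub]; congr 1; noncomm_ring
    _ = φ a * φ b + φ b * φ a := by rw [hφ, hφ, hφ, map_add]; noncomm_ring

theorem map_triple (hφ : IsJordanHom φ) (h2 : IsSMulRegular B 2) (a b : A) :
    φ (a * b * a) = φ a * φ b * φ a := by
  apply h2
  have e : 2 • (a * b * a)
      = a * (a * b + b * a) + (a * b + b * a) * a - (a * a * b + b * (a * a)) := by
    noncomm_ring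
  calc 2 • φ (a * b * a)
      = φ (a * (a * b + b * a) + (a * b + b * a) * a) - φ (a * a * b + b * (a * a)) := by
        rw [← map_nsmul, e, map_sub]
    _ = 2 • (φ a * φ b * φ a) := by
        rw [hφ.map_mul_add_mul_comm, hφ.map_mul_add_mul_comm, hφ.map_mul_add_mul_comm, hφ a]
        noncomm_ring

theorem map_triple_add_triple (hφ : IsJordanHom φ) (h2 : IsSMulRegular B 2) (a b c : A) :
    φ (a * b * c + c * b * a) = φ a * φ b * φ c + φ c * φ b * φ a := by
  calc φ (a * b * c + c * b * a)
      = φ ((a + c) * b * (a + c)) - φ (a * b * a) - φ (c * b * c) := by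
        rw [← map_sub, ← map_sub]; congr 1; noncomm_ring
    _ = φ a * φ b * φ c + φ c * φ b * φ a := by
        rw [hφ.map_triple h2, hφ.map_triple h2, hφ.map_triple h2, map_add]; noncomm_ring

theorem map_mul_sub_mul_mul_map_mul_sub_mul_swap (hφ : IsJordanHom φ) (h2 : IsSMulRegular B 2)
    (a b : A) : (φ (a * b) - φ a * φ b) * (φ (a * b) - φ b * φ a) = 0 := by
  calc (φ (a * b) - φ a * φ b) * (φ (a * b) - φ b * φ a)
      = (φ (a * b) * φ (a * b) + φ a * (φ b * φ b) * φ a)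
          - (φ a * φ b * φ (a * b) + φ (a * b) * φ b * φ a) := by noncomm_ring
    _ = φ (a * b * (a * b) + a * (b * b) * a) - φ (a * b * (a * b) + a * b * b * a) := by
        rw [map_add, hφ, hφ.map_triple h2, hφ, hφ.map_triple_add_triple h2]
    _ = 0 := by rw [sub_eq_zero]; congr 2; noncomm_ring

theorem map_mul_eq_or_map_mul_eq_swap [NoZeroDivisors B] (hφ : IsJordanHom φ)
    (h2 : IsSMulRegular B 2) (a b : A) :
    φ (a * b) = φ a * φ b ∨ φ (a * b) = φ b * φ a := by
  simpa only [mul_eq_zero, sub_eq_zero] using hφ.map_mul_sub_mul_mul_map_mul_sub_mul_swap h2 a b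

theorem map_mul_or_map_mul_swap [NoZeroDivisors B] (hφ : IsJordanHom φ)
    (h2 : IsSMulRegular B 2) :
    (∀ a b : A, φ (a * b) = φ a * φ b) ∨ (∀ a b : A, φ (a * b) = φ b * φ a) := by
  let ψ : A →+ B := φ
  let mulMap : A →+ A →+ B := AddMonoidHom.mul.compr₂ ψ
  let homMap : A →+ A →+ B := (AddMonoidHom.mul.compl₂ ψ).comp ψ
  let antihomMap : A →+ A →+ B := (AddMonoidHom.mul.flip.compl₂ ψ).comp ψ
  have pointwise (a : A) : mulMap a = homMap a ∨ mulMap a = antihomMap a :=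
    AddMonoidHom.eq_or_eq_of_forall_eq_or_eq _ _ _ _ (hφ.map_mul_eq_or_map_mul_eq_swap h2 a)
  exact (AddMonoidHom.eq_or_eq_of_forall_eq_or_eq _ _ _ _ pointwise).imp
    (fun h a b ↦ DFunLike.congr_fun (DFunLike.congr_fun h a) b)
    (fun h a b ↦ DFunLike.congr_fun (DFunLike.congr_fun h a) b)

end IsJordanHom

theorem jacobson_rickart_domain_general
    {F A B : Type*} [Field F] (h2 : (2 : F) ≠ 0)
    [NonUnitalRing A] [Module F A]
    [NonUnitalRing B] [Module F B]
    [NoZeroDivisors B]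
    (φ : A →ₗ[F] B) (hφ : ∀ x : A, φ (x * x) = φ x * φ x) :
    (∀ a b : A, φ (a * b) = φ a * φ b) ∨ (∀ a b : A, φ (a * b) = φ b * φ a) := by
  have h2B : IsSMulRegular B 2 := fun x y hxy ↦
    smul_right_injective B h2 (by simpa only [ofNat_smul_eq_nsmul] using hxy)
  exact IsJordanHom.map_mul_or_map_mul_swap hφ h2B

theorem jacobson_rickart_domain
    {F A B : Type*} [Field F] (h2 : (2 : F) ≠ 0)
    [NonUnitalRing A] [Module F A] [SMulCommClass F A A] [IsScalarTower F A A]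
    [NonUnitalRing B] [Module F B] [SMulCommClass F B B] [IsScalarTower F B B]
    [NoZeroDivisors B]
    (φ : A →ₗ[F] B) (hφ : ∀ x : A, φ (x * x) = φ x * φ x) :
    (∀ a b : A, φ (a * b) = φ a * φ b) ∨ (∀ a b : A, φ (a * b) = φ b * φ a) :=
  jacobson_rickart_domain_general h2 φ hφ
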